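/- arXiv:2302.01341 — 11 statements merged into one kernel-verified Lean document; each statement's English description precedes it below -/
import Mathlib

section
/- Let S be a semigroup, ω a complete congruence on S, and f₁, f₂ : S → [0,1]. Writing f̲ᵢ(z) = ⨅_{z' ∈ [z]ω} fᵢ(z') for the lower approximations, for every z ∈ S one has (f̲₁ ∘ f̲₂)(z) ≤ ⨅_{λ ∈ [z]ω} (f₁ ∘ f₂)(λ); that is, the sup-min composition of the lower approximations is pointwise below the lower approximation of the sup-min composition. (Theorem 3.1, membership component.) -/
open unitInterval

instance : Fact ((0:ℝ) ≤ 1) := ⟨zero_le_one⟩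

/-- Lower rough approximation: infimum of `f` over the ω-class of `z`. -/
noncomputable def lowerApp {S : Type*} (ω : S → S → Prop) (f : S → unitInterval) (z : S) :
    unitInterval :=
  ⨅ z' : {z' : S // ω z z'}, f z'.1

/-- Upper rough approximation: supremum of `f` over the ω-class of `z`. -/
noncomputable def upperApp {S : Type*} (ω : S → S → Prop) (f : S → unitInterval) (z : S) :
    unitInterval :=
  ⨆ z' : {z' : S // ω z z'}, f z'.1

/-- Sup-min composition of two fuzzy sets on a semigroup. -/
noncomputable def supMinComp {S : Type*} [Semigroup S] (f g : S → unitInterval) (z : S) :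
    unitInterval :=
  ⨆ p : {p : S × S // p.1 * p.2 = z}, min (f p.1.1) (g p.1.2)

/-- Inf-max composition of two fuzzy sets on a semigroup. -/
noncomputable def infMaxComp {S : Type*} [Semigroup S] (f g : S → unitInterval) (z : S) :
    unitInterval :=
  ⨅ p : {p : S × S // p.1 * p.2 = z}, max (f p.1.1) (g p.1.2)

section

variable {S : Type*}

theorem lowerApp_le {ω : S → S → Prop} {f : S → I} {z z' : S} (h : ω z z') :
    lowerApp ω f z ≤ f z' :=
  iInf_le (fun z' : {z' : S // ω z z'} => f z'.1) ⟨z', h⟩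

theorem le_lowerApp_iff {ω : S → S → Prop} {f : S → I} {z : S} {t : I} :
    t ≤ lowerApp ω f z ↔ ∀ z', ω z z' → t ≤ f z' := by
  simp only [lowerApp, le_iInf_iff, Subtype.forall]

variable [Semigroup S]

theorem min_le_supMinComp (f g : S → I) (a b : S) :
    min (f a) (g b) ≤ supMinComp f g (a * b) :=
  le_iSup (fun p : {p : S × S // p.1 * p.2 = a * b} => min (f p.1.1) (g p.1.2)) ⟨(a, b), rfl⟩

theorem supMinComp_le_iff {f g : S → I} {z : S} {t : I} :
    supMinComp f g z ≤ t ↔ ∀ a b, a * b = z → min (f a) (g b) ≤ t := by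
  simp only [supMinComp, iSup_le_iff, Subtype.forall, Prod.forall]

end

theorem supMinComp_lowerApp_le_general {S : Type*} [Semigroup S]
    (ω : S → S → Prop)
    (hComplete : ∀ x y c, ω (x * y) c → ∃ a b, ω x a ∧ ω y b ∧ c = a * b)
    (f₁ f₂ : S → unitInterval) :
    ∀ z : S, supMinComp (lowerApp ω f₁) (lowerApp ω f₂) z ≤ lowerApp ω (supMinComp f₁ f₂) z := by
  intro z
  refine le_lowerApp_iff.2 fun c hc => supMinComp_le_iff.2 fun x y hxy => ?_
  obtain ⟨a, b, hxa, hyb, rfl⟩ := hComplete x y c (hxy ▸ hc)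
  calc min (lowerApp ω f₁ x) (lowerApp ω f₂ y)
      ≤ min (f₁ a) (f₂ b) := min_le_min (lowerApp_le hxa) (lowerApp_le hyb)
    _ ≤ supMinComp f₁ f₂ (a * b) := min_le_supMinComp f₁ f₂ a b

theorem supMinComp_lowerApp_le {S : Type*} [Semigroup S]
    (ω : S → S → Prop) (hEquiv : Equivalence ω)
    (hCong : ∀ x x' y y', ω x x' → ω y y' → ω (x * y) (x' * y'))
    (hComplete : ∀ x y c, ω (x * y) c → ∃ a b, ω x a ∧ ω y b ∧ c = a * b)
    (f₁ f₂ : S → unitInterval) :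
    ∀ z : S, supMinComp (lowerApp ω f₁) (lowerApp ω f₂) z ≤ lowerApp ω (supMinComp f₁ f₂) z :=
  supMinComp_lowerApp_le_general ω hComplete f₁ f₂
end

section
/- Let S be a semigroup, ω a complete congruence on S, and g₁, g₂ : S → [0,1]. Writing ĝᵢ(z) = ⨆_{z' ∈ [z]ω} gᵢ(z') for the lower approximations of non-membership functions, for every z ∈ S one has (ĝ₁ ⋆ ĝ₂)(z) ≥ ⨆_{λ ∈ [z]ω} (g₁ ⋆ g₂)(λ); that is, the inf-max composition of the sup-approximations pointwise dominates the sup-approximation of the inf-max composition. (Theorem 3.1, non-membership component.) -/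
open unitInterval

theorem upperApp_le_infMaxComp {S : Type*} [Semigroup S]
    (ω : S → S → Prop) (hEquiv : Equivalence ω)
    (hCong : ∀ x x' y y', ω x x' → ω y y' → ω (x * y) (x' * y'))
    (hComplete : ∀ x y c, ω (x * y) c → ∃ a b, ω x a ∧ ω y b ∧ c = a * b)
    (g₁ g₂ : S → unitInterval) :
    ∀ z : S, upperApp ω (infMaxComp g₁ g₂) z ≤ infMaxComp (upperApp ω g₁) (upperApp ω g₂) z := by
  intro z
  apply iSup_le
  rintro ⟨l, hl⟩
  apply le_iInf
  rintro ⟨⟨a, b⟩, hab⟩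
  -- ω (a*b) l
  have hωl : ω (a * b) l := hab ▸ hl
  obtain ⟨a', b', ha', hb', heq⟩ := hComplete a b l hωl
  calc infMaxComp g₁ g₂ l ≤ max (g₁ a') (g₂ b') :=
        iInf_le_of_le ⟨(a', b'), heq.symm⟩ le_rfl
    _ ≤ max (upperApp ω g₁ a) (upperApp ω g₂ b) := by
        apply max_le_max
        · exact le_iSup_of_le ⟨a', ha'⟩ le_rfl
        · exact le_iSup_of_le ⟨b', hb'⟩ le_rfl
end

section
/- Let S be a semigroup, ω a congruence on S, and g₁, g₂ : S → [0,1]. Writing ǧᵢ(z) = ⨅_{z' ∈ [z]ω} gᵢ(z') for the upper approximations of non-membership functions, for every z ∈ S one has (ǧ₁ ⋆ ǧ₂)(z) ≥ ⨅_{λ ∈ [z]ω} (g₁ ⋆ g₂)(λ); that is, the inf-max composition of the inf-approximations pointwise dominates the inf-approximation of the inf-max composition. (Theorem 3.2, non-membership component.) -/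
open unitInterval

theorem lowerApp_le_infMaxComp {S : Type*} [Semigroup S]
    (ω : S → S → Prop) (hEquiv : Equivalence ω)
    (hCong : ∀ x x' y y', ω x x' → ω y y' → ω (x * y) (x' * y'))
    (g₁ g₂ : S → unitInterval) :
    ∀ z : S, lowerApp ω (infMaxComp g₁ g₂) z ≤ infMaxComp (lowerApp ω g₁) (lowerApp ω g₂) z := by
  intro z
  unfold infMaxComp lowerApp
  apply le_iInf
  rintro ⟨⟨a, b⟩, hab⟩
  have h1 : (⨅ a' : {a' : S // ω a a'}, g₁ a'.1) ⊔ (⨅ b' : {b' : S // ω b b'}, g₂ b'.1)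
      = ⨅ a' : {a' : S // ω a a'}, ⨅ b' : {b' : S // ω b b'}, g₁ a'.1 ⊔ g₂ b'.1 := by
    rw [iInf_sup_eq]
    exact iInf_congr fun a' => sup_iInf_eq _ _
  show _ ≤ (⨅ a' : {a' : S // ω a a'}, g₁ a'.1) ⊔ (⨅ b' : {b' : S // ω b b'}, g₂ b'.1)
  rw [h1]
  apply le_iInf; rintro ⟨a', ha'⟩
  apply le_iInf; rintro ⟨b', hb'⟩
  have hz : ω z (a' * b') := hab ▸ hCong a a' b b' ha' hb'
  calc (⨅ z' : {z' : S // ω z z'}, ⨅ p : {p : S × S // p.1 * p.2 = z'.1},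
          g₁ p.1.1 ⊔ g₂ p.1.2)
      ≤ ⨅ p : {p : S × S // p.1 * p.2 = a' * b'}, g₁ p.1.1 ⊔ g₂ p.1.2 :=
        iInf_le_of_le ⟨a' * b', hz⟩ le_rfl
    _ ≤ g₁ a' ⊔ g₂ b' := iInf_le_of_le ⟨(a', b'), rfl⟩ le_rfl
end

section
/- Let S be a semigroup, ω a congruence on S, and f : S → [0,1] a fuzzy sub-semigroup membership function, i.e. f(x*y) ≥ min(f(x), f(y)) for all x, y ∈ S. Then the upper approximation f̄(z) = ⨆_{z' ∈ [z]ω} f(z') satisfies f̄(x*y) ≥ min(f̄(x), f̄(y)) for all x, y ∈ S. (Theorem 4.1, interval-membership component.) -/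
open unitInterval

theorem upperApp_subsemigroup_min {S : Type*} [Semigroup S]
    (ω : S → S → Prop) (hEquiv : Equivalence ω)
    (hCong : ∀ x x' y y', ω x x' → ω y y' → ω (x * y) (x' * y'))
    (f : S → unitInterval)
    (hf : ∀ x y : S, min (f x) (f y) ≤ f (x * y)) :
    ∀ x y : S, min (upperApp ω f x) (upperApp ω f y) ≤ upperApp ω f (x * y) := by
  intro x y
  show upperApp ω f x ⊓ upperApp ω f y ≤ _
  unfold upperApp
  rw [iSup_inf_eq]
  refine iSup_le fun x' => ?_
  rw [inf_iSup_eq]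
  refine iSup_le fun y' => ?_
  exact le_trans (hf x'.1 y'.1) (le_iSup (fun z' : {z' : S // ω (x*y) z'} => f z'.1)
    ⟨x'.1 * y'.1, hCong x x'.1 y y'.1 x'.2 y'.2⟩)
end

section
/- Let S be a semigroup, ω a congruence on S, and f : S → [0,1] a fuzzy left-ideal membership function, i.e. f(x*y) ≥ f(y) for all x, y ∈ S. Then the upper approximation f̄(z) = ⨆_{z' ∈ [z]ω} f(z') satisfies f̄(x*y) ≥ f̄(y) for all x, y ∈ S. (Theorem 4.2, interval-membership component; the right-ideal statement with f(x*y) ≥ f(x) holds symmetrically.) -/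
open unitInterval

theorem upperApp_leftIdeal_ge {S : Type*} [Semigroup S]
    (ω : S → S → Prop) (hEquiv : Equivalence ω)
    (hCong : ∀ x x' y y', ω x x' → ω y y' → ω (x * y) (x' * y'))
    (f : S → unitInterval)
    (hf : ∀ x y : S, f y ≤ f (x * y)) :
    ∀ x y : S, upperApp ω f y ≤ upperApp ω f (x * y) := by
  intro x y
  apply iSup_le
  rintro ⟨y', hy'⟩
  exact le_iSup_of_le ⟨x * y', hCong x x y y' (hEquiv.refl x) hy'⟩ (hf x y')
end

section
/- Let S be a semigroup, ω a complete congruence on S, and f : S → [0,1] a fuzzy left-ideal membership function, i.e. f(x*y) ≥ f(y) for all x, y ∈ S. Then the lower approximation f̲(z) = ⨅_{z' ∈ [z]ω} f(z') satisfies f̲(x*y) ≥ f̲(y) for all x, y ∈ S. (Theorem 4.4, interval-membership component.) -/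
open unitInterval

theorem lowerApp_le_lowerApp_of_forall_exists {S : Type*} {ω : S → S → Prop}
    {f : S → unitInterval} {y z : S} (h : ∀ c, ω z c → ∃ b, ω y b ∧ f b ≤ f c) :
    lowerApp ω f y ≤ lowerApp ω f z :=
  le_iInf fun ⟨c, hc⟩ =>
    let ⟨b, hyb, hbc⟩ := h c hc
    (iInf_le (fun b : {b : S // ω y b} => f b.1) ⟨b, hyb⟩).trans hbc

theorem lowerApp_leftIdeal_ge_general {S : Type*} [Semigroup S]
    (ω : S → S → Prop)
    (hComplete : ∀ x y c, ω (x * y) c → ∃ a b, ω x a ∧ ω y b ∧ c = a * b)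
    (f : S → unitInterval)
    (hf : ∀ x y : S, f y ≤ f (x * y)) :
    ∀ x y : S, lowerApp ω f y ≤ lowerApp ω f (x * y) := by
  intro x y
  apply lowerApp_le_lowerApp_of_forall_exists
  intro c hc
  obtain ⟨a, b, -, hyb, rfl⟩ := hComplete x y c hc
  exact ⟨b, hyb, hf a b⟩

theorem lowerApp_leftIdeal_ge {S : Type*} [Semigroup S]
    (ω : S → S → Prop) (hEquiv : Equivalence ω)
    (hCong : ∀ x x' y y', ω x x' → ω y y' → ω (x * y) (x' * y'))
    (hComplete : ∀ x y c, ω (x * y) c → ∃ a b, ω x a ∧ ω y b ∧ c = a * b)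
    (f : S → unitInterval)
    (hf : ∀ x y : S, f y ≤ f (x * y)) :
    ∀ x y : S, lowerApp ω f y ≤ lowerApp ω f (x * y) :=
  lowerApp_leftIdeal_ge_general ω hComplete f hf
end

section
/- Let S be a semigroup, ω a congruence on S, and f : S → [0,1] satisfying the left-ideal non-membership condition f(x*y) ≤ f(y) for all x, y ∈ S. Then the lower approximation f̲(z) = ⨅_{z' ∈ [z]ω} f(z') satisfies f̲(x*y) ≤ f̲(y) for all x, y ∈ S. (Theorems 4.2 and 4.4, Pythagorean non-membership component.) -/
open unitInterval

theorem lowerApp_leftIdeal_le {S : Type*} [Semigroup S]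
    (ω : S → S → Prop) (hEquiv : Equivalence ω)
    (hCong : ∀ x x' y y', ω x x' → ω y y' → ω (x * y) (x' * y'))
    (f : S → unitInterval)
    (hf : ∀ x y : S, f (x * y) ≤ f y) :
    ∀ x y : S, lowerApp ω f (x * y) ≤ lowerApp ω f y := by
  intro x y
  apply le_iInf
  rintro ⟨y', hy⟩
  exact le_trans (iInf_le _ ⟨x * y', hCong x x y y' (hEquiv.refl x) hy⟩) (hf x y')
end

section
/- Let S be a semigroup, ω a congruence on S, and f : S → [0,1] a fuzzy bi-ideal membership function, i.e. f(x*y*z) ≥ min(f(x), f(z)) for all x, y, z ∈ S. Then the upper approximation f̄(w) = ⨆_{w' ∈ [w]ω} f(w') satisfies f̄(x*y*z) ≥ min(f̄(x), f̄(z)) for all x, y, z ∈ S. (Theorem 4.5, interval-membership component.) -/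
open unitInterval

theorem upperApp_biIdeal_min {S : Type*} [Semigroup S]
    (ω : S → S → Prop) (hEquiv : Equivalence ω)
    (hCong : ∀ x x' y y', ω x x' → ω y y' → ω (x * y) (x' * y'))
    (f : S → unitInterval)
    (hf : ∀ x y z : S, min (f x) (f z) ≤ f (x * y * z)) :
    ∀ x y z : S, min (upperApp ω f x) (upperApp ω f z) ≤ upperApp ω f (x * y * z) := by
  intro x y z
  unfold upperApp
  rw [iSup_inf_eq]
  refine iSup_le fun x' => ?_
  rw [inf_iSup_eq]
  refine iSup_le fun z' => ?_
  have hω : ω (x * y * z) (x'.1 * y * z'.1) :=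
    hCong _ _ _ _ (hCong _ _ _ _ x'.2 (hEquiv.refl y)) z'.2
  calc f x'.1 ⊓ f z'.1 ≤ f (x'.1 * y * z'.1) := hf _ _ _
    _ ≤ _ := le_iSup (fun w : {w // ω (x*y*z) w} => f w.1) ⟨_, hω⟩
end

section
/- Let S be a semigroup, ω a complete congruence on S, and f : S → [0,1] a fuzzy bi-ideal membership function, i.e. f(x*y*z) ≥ min(f(x), f(z)) for all x, y, z ∈ S. Then the lower approximation f̲(w) = ⨅_{w' ∈ [w]ω} f(w') satisfies f̲(x*y*z) ≥ min(f̲(x), f̲(z)) for all x, y, z ∈ S. (Theorem 4.6, interval-membership component.) -/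
open unitInterval

theorem lowerApp_biIdeal_min {S : Type*} [Semigroup S]
    (ω : S → S → Prop) (hEquiv : Equivalence ω)
    (hCong : ∀ x x' y y', ω x x' → ω y y' → ω (x * y) (x' * y'))
    (hComplete : ∀ x y c, ω (x * y) c → ∃ a b, ω x a ∧ ω y b ∧ c = a * b)
    (f : S → unitInterval)
    (hf : ∀ x y z : S, min (f x) (f z) ≤ f (x * y * z)) :
    ∀ x y z : S, min (lowerApp ω f x) (lowerApp ω f z) ≤ lowerApp ω f (x * y * z) := by
  intro x y z
  apply le_iInf
  rintro ⟨c, hc⟩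
  obtain ⟨d, e, hd, he, rfl⟩ := hComplete (x * y) z c hc
  obtain ⟨a, b, ha, hb, rfl⟩ := hComplete x y d hd
  refine le_trans ?_ (hf a b e)
  exact min_le_min (iInf_le (fun w : {w // ω x w} => f w.1) ⟨a, ha⟩) (iInf_le (fun w : {w // ω z w} => f w.1) ⟨e, he⟩)
end

section
/- Let S be a semigroup, ω a congruence on S, and f, g : S → [0,1] the membership and non-membership functions of a fuzzy interior ideal, i.e. f(x*y*z) ≥ f(y) and g(x*y*z) ≤ g(y) for all x, y, z ∈ S. Then the upper approximation f̄(w) = ⨆_{w' ∈ [w]ω} f(w') satisfies f̄(x*y*z) ≥ f̄(y), and the infimum approximation ǧ(w) = ⨅_{w' ∈ [w]ω} g(w') satisfies ǧ(x*y*z) ≤ ǧ(y), for all x, y, z ∈ S. (Theorem 4.7: the upper approximation of a cubic Pythagorean fuzzy interior ideal is a cubic Pythagorean fuzzy interior ideal.) -/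
open unitInterval

theorem upperApp_interiorIdeal {S : Type*} [Semigroup S]
    (ω : S → S → Prop) (hEquiv : Equivalence ω)
    (hCong : ∀ x x' y y', ω x x' → ω y y' → ω (x * y) (x' * y'))
    (f g : S → unitInterval)
    (hf : ∀ x y z : S, f y ≤ f (x * y * z))
    (hg : ∀ x y z : S, g (x * y * z) ≤ g y) :
    ∀ x y z : S,
      upperApp ω f y ≤ upperApp ω f (x * y * z) ∧
        lowerApp ω g (x * y * z) ≤ lowerApp ω g y := by
  intro x y z
  constructor
  · apply iSup_le
    rintro ⟨y', hy'⟩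
    have hω : ω (x * y * z) (x * y' * z) :=
      hCong _ _ _ _ (hCong _ _ _ _ (hEquiv.refl x) hy') (hEquiv.refl z)
    calc f y' ≤ f (x * y' * z) := hf x y' z
      _ ≤ _ := le_iSup (fun w : {w // ω (x*y*z) w} => f w.1) ⟨x * y' * z, hω⟩
  · apply le_iInf
    rintro ⟨y', hy'⟩
    have hω : ω (x * y * z) (x * y' * z) :=
      hCong _ _ _ _ (hCong _ _ _ _ (hEquiv.refl x) hy') (hEquiv.refl z)
    calc lowerApp ω g (x*y*z)
        ≤ g (x * y' * z) := iInf_le (fun w : {w // ω (x*y*z) w} => g w.1) ⟨x * y' * z, hω⟩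
      _ ≤ g y' := hg x y' z
end

section
/- Let S be a semigroup, ω a complete congruence on S, and f, g : S → [0,1] the membership and non-membership functions of a fuzzy interior ideal, i.e. f(x*y*z) ≥ f(y) and g(x*y*z) ≤ g(y) for all x, y, z ∈ S. Then the lower approximation f̲(w) = ⨅_{w' ∈ [w]ω} f(w') satisfies f̲(x*y*z) ≥ f̲(y), and the supremum approximation ĝ(w) = ⨆_{w' ∈ [w]ω} g(w') satisfies ĝ(x*y*z) ≤ ĝ(y), for all x, y, z ∈ S. (Theorem 4.8: the lower approximation of a cubic Pythagorean fuzzy interior ideal with respect to a complete congruence is a cubic Pythagorean fuzzy interior ideal.) -/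
open unitInterval

theorem lowerApp_interiorIdeal {S : Type*} [Semigroup S]
    (ω : S → S → Prop) (hEquiv : Equivalence ω)
    (hCong : ∀ x x' y y', ω x x' → ω y y' → ω (x * y) (x' * y'))
    (hComplete : ∀ x y c, ω (x * y) c → ∃ a b, ω x a ∧ ω y b ∧ c = a * b)
    (f g : S → unitInterval)
    (hf : ∀ x y z : S, f y ≤ f (x * y * z))
    (hg : ∀ x y z : S, g (x * y * z) ≤ g y) :
    ∀ x y z : S,
      lowerApp ω f y ≤ lowerApp ω f (x * y * z) ∧
        upperApp ω g (x * y * z) ≤ upperApp ω g y := by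
  intro x y z
  have key : ∀ c, ω (x * y * z) c → ∃ a₂, ω y a₂ ∧ ∃ a₁ b, c = a₁ * a₂ * b := by
    intro c hc
    obtain ⟨a, b, ha, hb, rfl⟩ := hComplete (x * y) z c hc
    obtain ⟨a₁, a₂, h₁, h₂, rfl⟩ := hComplete x y a ha
    exact ⟨a₂, h₂, a₁, b, rfl⟩
  constructor
  · refine le_iInf fun ⟨c, hc⟩ => ?_
    obtain ⟨a₂, h₂, a₁, b, rfl⟩ := key c hc
    exact le_trans (iInf_le _ ⟨a₂, h₂⟩) (hf a₁ a₂ b)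
  · refine iSup_le fun ⟨c, hc⟩ => ?_
    obtain ⟨a₂, h₂, a₁, b, rfl⟩ := key c hc
    exact le_trans (hg a₁ a₂ b) (le_iSup (fun z' : {z' : S // ω y z'} => g z'.1) ⟨a₂, h₂⟩)
end
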